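/- arXiv:0807.0087 — 3 statements merged into one kernel-verified Lean document; each statement's English description precedes it below -/
import Mathlib

section
/- In a tree-child time consistent hybridization network N, a child v of a node u is a tree node (has u as its only parent) if, and only if, v is a strict descendant of u (every path from the root to v contains u). -/
open Classical

/-- A walk (path) in a digraph: a nonempty list of vertices with consecutive arcs. -/
def IsWalk {V : Type} (E : V → V → Prop) (p : List V) : Prop := p ≠ [] ∧ p.Chain' E

/-- A path with origin `u` and end `v`. -/
def WalkFromTo {V : Type} (E : V → V → Prop) (u v : V) (p : List V) : Prop :=
  IsWalk E p ∧ p.head? = some u ∧ p.getLast? = some v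

/-- `v` is a descendant of `u` (possibly trivial path from `u` to `v`). -/
def Desc {V : Type} (E : V → V → Prop) (u v : V) : Prop := Relation.ReflTransGen E u v

/-- A root: a node with no incoming arcs. -/
def IsRootNode {V : Type} (E : V → V → Prop) (r : V) : Prop := ∀ u, ¬ E u r

/-- `u` is a strict ancestor of `v`: `v` is a descendant of `u` and every path
from a root to `v` contains `u`. -/
def StrictAnc {V : Type} (E : V → V → Prop) (u v : V) : Prop :=
  Desc E u v ∧ ∀ (r : V) (p : List V), IsRootNode E r → WalkFromTo E r v p → u ∈ p

/-- In-degree. -/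
noncomputable def indeg {V : Type} (E : V → V → Prop) (v : V) : ℕ := {u | E u v}.ncard
/-- Out-degree. -/
noncomputable def outdeg {V : Type} (E : V → V → Prop) (v : V) : ℕ := {w | E v w}.ncard

/-- Tree node: in-degree at most 1. -/
def IsTreeNode {V : Type} (E : V → V → Prop) (v : V) : Prop := indeg E v ≤ 1
/-- Hybrid node: in-degree at least 2. -/
def IsHybrid {V : Type} (E : V → V → Prop) (v : V) : Prop := 2 ≤ indeg E v
/-- Leaf: no outgoing arcs. -/
def IsLeaf {V : Type} (E : V → V → Prop) (v : V) : Prop := ∀ w, ¬ E v w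

/-- Acyclicity: no non-trivial path from a node to itself. -/
def Acyclic {V : Type} (E : V → V → Prop) : Prop := ∀ v, ¬ Relation.TransGen E v v

/-- A hybridization network: a rooted DAG whose single root has out-degree > 1. -/
structure IsHybNet {V : Type} (E : V → V → Prop) (r : V) : Prop where
  acyclic : Acyclic E
  isRoot : IsRootNode E r
  uniqueRoot : ∀ x, IsRootNode E x → x = r
  rootOut : 2 ≤ outdeg E r

/-- Tree-child condition: every internal node has a tree-node child. -/
def TreeChild {V : Type} (E : V → V → Prop) : Prop :=
  ∀ v, ¬ IsLeaf E v → ∃ w, E v w ∧ IsTreeNode E w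

/-- Time consistency: a temporal representation exists. -/
def TimeConsistent {V : Type} (E : V → V → Prop) : Prop :=
  ∃ τ : V → ℕ, ∀ u v, E u v → (IsTreeNode E v → τ u < τ v) ∧ (IsHybrid E v → τ u = τ v)

/-- The leaves are bijectively labeled by `S` via `leaf`. -/
def LabelsLeaves {V S : Type} (E : V → V → Prop) (leaf : S → V) : Prop :=
  Function.Injective leaf ∧ (∀ s, IsLeaf E (leaf s)) ∧ ∀ v, IsLeaf E v → ∃ s, leaf s = v

/-- Distance: length of a shortest path from `u` to `v`. -/
noncomputable def dist {V : Type} (E : V → V → Prop) (u v : V) : ℕ :=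
  sInf {n | ∃ p, WalkFromTo E u v p ∧ p.length = n + 1}

/-- Height: largest length of a path from `v` to a leaf. -/
noncomputable def height {V : Type} (E : V → V → Prop) (v : V) : ℕ :=
  sSup {n | ∃ p w, WalkFromTo E v w p ∧ IsLeaf E w ∧ p.length = n + 1}

/-- Common ancestors of `u` and `v` that are strict ancestors of at least one of them. -/
def CSAnc {V : Type} (E : V → V → Prop) (u v : V) : Set V :=
  {x | Desc E x u ∧ Desc E x v ∧ (StrictAnc E x u ∨ StrictAnc E x v)}

/-- `x` is a least common semi-strict ancestor of `u` and `v`. -/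
def IsLCSA {V : Type} (E : V → V → Prop) (u v x : V) : Prop :=
  x ∈ CSAnc E u v ∧ ∀ y ∈ CSAnc E u v, height E x ≤ height E y

/-- The least common semi-strict ancestor `[u,v]` (the root `r` witnesses nonemptiness). -/
noncomputable def lcsa {V : Type} (E : V → V → Prop) (r u v : V) : V :=
  @Classical.epsilon V ⟨r⟩ (IsLCSA E u v)

/-- `ℓ_N(u,v)`: the distance from `[u,v]` to `u`. -/
noncomputable def ell {V : Type} (E : V → V → Prop) (r u v : V) : ℕ :=
  dist E (lcsa E r u v) u

/-- `L_N(u,v) = ℓ_N(u,v) + ℓ_N(v,u)`: the LCSA-path length between `u` and `v`. -/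
noncomputable def pathLen {V : Type} (E : V → V → Prop) (r u v : V) : ℕ :=
  ell E r u v + ell E r v u

/-- `h_N(u,v)`: −1 if `[u,v]` is a strict ancestor of `u` only, 1 if of `v` only, 0 if of both. -/
noncomputable def hval {V : Type} (E : V → V → Prop) (r u v : V) : ℤ :=
  if StrictAnc E (lcsa E r u v) u then
    (if StrictAnc E (lcsa E r u v) v then 0 else -1)
  else 1

/-- Siblings: distinct nodes sharing a parent. -/
def Sibling {V : Type} (E : V → V → Prop) (u v : V) : Prop :=
  u ≠ v ∧ ∃ p, E p u ∧ E p v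

/-- A tree path: a non-trivial path whose end and intermediate nodes are tree nodes. -/
def TreePath {V : Type} (E : V → V → Prop) (p : List V) (u v : V) : Prop :=
  WalkFromTo E u v p ∧ 2 ≤ p.length ∧ ∀ w ∈ p.tail, IsTreeNode E w

/-- `v` is a tree descendant of `u`. -/
def TreeDesc {V : Type} (E : V → V → Prop) (u v : V) : Prop := ∃ p, TreePath E p u v

/-- Quasi-binary hybridization network. -/
def QuasiBinary {V : Type} (E : V → V → Prop) : Prop :=
  ∀ v : V, (indeg E v, outdeg E v) ∈ ({(0,2),(1,0),(1,2),(2,0),(2,1),(2,2)} : Set (ℕ × ℕ))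

/-- Fully resolved hybridization network node types. -/
def FullyResolvedHyb {V : Type} (E : V → V → Prop) : Prop :=
  ∀ v : V, (indeg E v, outdeg E v) ∈ ({(0,2),(1,0),(1,2),(2,0),(2,2)} : Set (ℕ × ℕ))

/-- Fully resolved phylogenetic network node types. -/
def FullyResolvedPhylo {V : Type} (E : V → V → Prop) : Prop :=
  ∀ v : V, (indeg E v, outdeg E v) ∈ ({(0,2),(1,0),(1,2),(2,1)} : Set (ℕ × ℕ))

/-- Phylogenetic network condition: every hybrid node has exactly one child, a tree node. -/
def PhyloNet {V : Type} (E : V → V → Prop) : Prop :=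
  ∀ v, IsHybrid E v → ∃ w, E v w ∧ IsTreeNode E w ∧ ∀ x, E v x → x = w


/-!
If `v` is a tree node, its only parent `u` lies on every path from the root to `v`. If `v` is a
hybrid node, take a second parent `w ≠ u` and walk upwards from `w`, always to a parent other
than `u`. Such a parent exists at every step: a node above `v` whose only parent is `u` would be
a tree child of `u`, hence strictly later than `u` under a temporal representation, whereas `v`
has the same time as `u`. By acyclicity the walk reaches the root, giving a root path to `v`
that avoids `u`.
-/

def IsTemporalRepr {V : Type} (E : V → V → Prop) (τ : V → ℕ) : Prop :=
  ∀ u v, E u v → (IsTreeNode E v → τ u < τ v) ∧ (IsHybrid E v → τ u = τ v)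

section Walks

variable {V : Type} {E : V → V → Prop}

lemma walkFromTo_pair {a b : V} (h : E a b) : WalkFromTo E a b [a, b] :=
  ⟨⟨by simp, List.isChain_pair.mpr h⟩, rfl, rfl⟩

lemma WalkFromTo.cons {a x v : V} {q : List V} (hq : WalkFromTo E x v q) (h : E a x) :
    WalkFromTo E a v (a :: q) := by
  obtain ⟨⟨hne, hchain⟩, hx, hv⟩ := hq
  refine ⟨⟨List.cons_ne_nil _ _, List.isChain_cons.mpr ⟨?_, hchain⟩⟩, rfl, ?_⟩
  · rw [hx]
    rintro y ⟨⟩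
    exact h
  · simp [List.getLast?_cons, hv]

lemma WalkFromTo.desc {x v : V} {q : List V} (hq : WalkFromTo E x v q) : Desc E x v := by
  obtain ⟨⟨hne, hchain⟩, hx, hv⟩ := hq
  rw [List.head?_eq_some_head hne, Option.some_inj] at hx
  rw [List.getLast?_eq_some_getLast hne, Option.some_inj] at hv
  exact hx ▸ hv ▸ List.relationReflTransGen_of_exists_isChain q hchain hne

lemma WalkFromTo.exists_mem_rel_last {x v : V} {q : List V} (hq : WalkFromTo E x v q)
    (hxv : x ≠ v) : ∃ z ∈ q, E z v := by
  obtain ⟨⟨hne, hchain⟩, hx, hv⟩ := hq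
  rw [List.getLast?_eq_some_getLast hne, Option.some_inj] at hv
  have hsplit : q = q.dropLast ++ [v] := hv ▸ (List.dropLast_append_getLast hne).symm
  have hinit : q.dropLast ≠ [] := by
    intro h
    rw [h, List.nil_append] at hsplit
    rw [hsplit] at hx
    exact hxv (Option.some_inj.mp hx).symm
  replace hchain : List.IsChain E (q.dropLast ++ [v]) := hsplit ▸ hchain
  rw [List.isChain_append] at hchain
  refine ⟨q.dropLast.getLast hinit, List.mem_of_mem_dropLast (List.getLast_mem hinit), ?_⟩
  exact hchain.2.2 _ (List.getLast?_eq_some_getLast hinit) v rfl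

end Walks

section Network

variable {V : Type} {E : V → V → Prop}

lemma isTreeNode_iff_subsingleton [Finite V] {v : V} :
    IsTreeNode E v ↔ {u | E u v}.Subsingleton :=
  Set.ncard_le_one_iff_subsingleton

lemma isHybrid_iff_not_isTreeNode {v : V} : IsHybrid E v ↔ ¬ IsTreeNode E v := by
  unfold IsHybrid IsTreeNode
  omega

lemma Acyclic.ne_of_rel (hE : Acyclic E) {u v : V} (h : E u v) : u ≠ v := by
  rintro rfl
  exact hE u (Relation.TransGen.single h)

lemma Acyclic.wellFounded [Finite V] (hE : Acyclic E) : WellFounded (Relation.TransGen E) :=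
  haveI : Std.Irrefl (Relation.TransGen E) := ⟨hE⟩
  Finite.wellFounded_of_trans_of_irrefl _

lemma strictAnc_of_isTreeNode [Finite V] {u v : V} (huv : E u v) (hv : IsTreeNode E v) :
    StrictAnc E u v := by
  refine ⟨Relation.ReflTransGen.single huv, fun r p hr hp => ?_⟩
  have hrv : r ≠ v := by
    rintro rfl
    exact hr u huv
  obtain ⟨z, hz, hzv⟩ := hp.exists_mem_rel_last hrv
  rwa [isTreeNode_iff_subsingleton.mp hv hzv huv] at hz

lemma IsTemporalRepr.le_of_rel {τ : V → ℕ} (hτ : IsTemporalRepr E τ) {a b : V} (h : E a b) :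
    τ a ≤ τ b := by
  by_cases hb : IsTreeNode E b
  · exact ((hτ a b h).1 hb).le
  · exact ((hτ a b h).2 (isHybrid_iff_not_isTreeNode.mpr hb)).le

lemma IsTemporalRepr.le_of_desc {τ : V → ℕ} (hτ : IsTemporalRepr E τ) {a b : V}
    (h : Desc E a b) : τ a ≤ τ b := by
  induction h with
  | refl => exact le_rfl
  | tail _ hbc ih => exact ih.trans (hτ.le_of_rel hbc)

lemma IsTemporalRepr.exists_parent_ne {τ : V → ℕ} (hτ : IsTemporalRepr E τ) {u v x : V}
    (huv : E u v) (hv : IsHybrid E v) (hx : ¬ IsRootNode E x) (hxv : Desc E x v) :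
    ∃ w, E w x ∧ w ≠ u := by
  by_contra! honly
  obtain ⟨w, hw⟩ : ∃ w, E w x := by simpa [IsRootNode] using hx
  have hux : E u x := honly w hw ▸ hw
  have hxtree : IsTreeNode E x := by
    have hsub : {z | E z x} ⊆ {u} := fun z hz => honly z hz
    calc indeg E x ≤ ({u} : Set V).ncard := Set.ncard_le_ncard hsub
      _ = 1 := Set.ncard_singleton u
  have hlt := (hτ u x hux).1 hxtree
  have hle := hτ.le_of_desc hxv
  have heq := (hτ u v huv).2 hv
  omega

lemma IsHybNet.exists_rootWalk_avoiding [Finite V] {r : V} (hnet : IsHybNet E r)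
    {τ : V → ℕ} (hτ : IsTemporalRepr E τ) {u v : V} (huv : E u v) (hv : IsHybrid E v)
    (x : V) (q : List V) (hq : WalkFromTo E x v q) (hu : u ∉ q) :
    ∃ p, WalkFromTo E r v p ∧ u ∉ p := by
  induction x using hnet.acyclic.wellFounded.induction generalizing q with
  | _ x ih =>
    by_cases hxr : x = r
    · exact ⟨q, hxr ▸ hq, hu⟩
    have hxroot : ¬ IsRootNode E x := fun h => hxr (hnet.uniqueRoot x h)
    obtain ⟨w, hwx, hwu⟩ := hτ.exists_parent_ne huv hv hxroot hq.desc
    exact ih w (Relation.TransGen.single hwx) (w :: q) (hq.cons hwx)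
      (List.not_mem_cons_of_ne_of_not_mem hwu.symm hu)

lemma IsHybNet.isTreeNode_of_strictAnc [Finite V] {r : V} (hnet : IsHybNet E r)
    (hti : TimeConsistent E) {u v : V} (huv : E u v) (h : StrictAnc E u v) :
    IsTreeNode E v := by
  by_contra htree
  have hv : IsHybrid E v := isHybrid_iff_not_isTreeNode.mpr htree
  obtain ⟨τ, hτ⟩ := hti
  obtain ⟨w, hwv, hwu⟩ := Set.exists_ne_of_one_lt_ncard hv u
  have hu : u ∉ [w, v] := by
    simp only [List.mem_cons, List.not_mem_nil, or_false, not_or]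
    exact ⟨hwu.symm, hnet.acyclic.ne_of_rel huv⟩
  obtain ⟨p, hp, hup⟩ :=
    hnet.exists_rootWalk_avoiding hτ huv hv w [w, v] (walkFromTo_pair hwv) hu
  exact hup (h.2 r p hnet.isRoot hp)

end Network

theorem stmt2_general {V : Type} [Fintype V] (E : V → V → Prop) (r : V)
    (hnet : IsHybNet E r) (hti : TimeConsistent E)
    (u v : V) (huv : E u v) :
    IsTreeNode E v ↔ StrictAnc E u v :=
  ⟨strictAnc_of_isTreeNode huv, hnet.isTreeNode_of_strictAnc hti huv⟩

/-- In a TCTC hybridization network, a child `v` of `u` is a tree node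
iff `v` is a strict descendant of `u`. -/
theorem stmt2 {V : Type} [Fintype V] (E : V → V → Prop) (r : V)
    (hnet : IsHybNet E r) (htc : TreeChild E) (hti : TimeConsistent E)
    (u v : V) (huv : E u v) :
    IsTreeNode E v ↔ StrictAnc E u v :=
  stmt2_general E r hnet hti u v huv
end

section
/- Every tree-child time consistent hybridization network with more than one leaf contains a node v satisfying one of the following: (a) v is an internal tree node and all its children are tree leaves; (b) v is an internal hybrid node, all its children are tree leaves, and all its siblings are leaves or hybrid nodes; (c) v is a hybrid leaf and all its siblings are leaves or hybrid nodes. -/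
open Classical

def IsTemporalRepresentation {V : Type} (E : V → V → Prop) (τ : V → ℕ) : Prop :=
  ∀ u v, E u v → (IsTreeNode E v → τ u < τ v) ∧ (IsHybrid E v → τ u = τ v)

section

variable {V : Type} {E : V → V → Prop}

lemma not_isHybrid_iff_isTreeNode {v : V} : ¬ IsHybrid E v ↔ IsTreeNode E v :=
  isHybrid_iff_not_isTreeNode.not_left

lemma not_isLeaf_of_outdeg_pos {v : V} (h : 0 < outdeg E v) : ¬ IsLeaf E v := by
  obtain ⟨w, hw⟩ := Set.nonempty_of_ncard_ne_zero h.ne'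
  exact fun hv => hv w hw

lemma IsHybNet.not_isLeaf_root {r : V} (hnet : IsHybNet E r) : ¬ IsLeaf E r :=
  not_isLeaf_of_outdeg_pos (by have := hnet.rootOut; omega)

lemma Acyclic.exists_mem_forall_not_mem_of_adj [Finite V] (hE : Acyclic E) {A : Set V}
    (hA : A.Nonempty) : ∃ v ∈ A, ∀ w, E v w → w ∉ A := by
  let R : V → V → Prop := fun a b => Relation.TransGen E b a
  have : IsTrans V R := ⟨fun _ _ _ h₁ h₂ => h₂.trans h₁⟩
  have : Std.Irrefl R := ⟨hE⟩
  obtain ⟨v, hvA, hv⟩ := (Finite.wellFounded_of_trans_of_irrefl R).has_min A hA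
  exact ⟨v, hvA, fun w hvw hwA => hv w hwA (.single hvw)⟩

variable {τ : V → ℕ}

/- Among the internal nodes of latest time take one lowest in the network: an internal tree
child would be later, an internal hybrid child equally late and lower. -/
theorem IsTemporalRepresentation.exists_latest_internal_children_isLeaf [Finite V]
    (hτ : IsTemporalRepresentation E τ) (hE : Acyclic E) (hint : ∃ u, ¬ IsLeaf E u) :
    ∃ v, ¬ IsLeaf E v ∧ (∀ u, ¬ IsLeaf E u → τ u ≤ τ v) ∧ ∀ w, E v w → IsLeaf E w := by
  obtain ⟨b, hb_int, hb_max⟩ :=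
    Set.exists_max_image {u | ¬ IsLeaf E u} τ (Set.toFinite _) hint
  obtain ⟨v, ⟨hv_int, hvb⟩, hv_low⟩ :=
    hE.exists_mem_forall_not_mem_of_adj (A := {u | ¬ IsLeaf E u ∧ τ u = τ b}) ⟨b, hb_int, rfl⟩
  refine ⟨v, hv_int, fun u hu => hvb ▸ hb_max u hu, fun w hvw => ?_⟩
  by_contra hw_int
  have hwb : τ w ≤ τ b := hb_max w hw_int
  by_cases hw : IsTreeNode E w
  · have := (hτ v w hvw).1 hw
    omega
  · have := (hτ v w hvw).2 (isHybrid_iff_not_isTreeNode.2 hw)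
    exact hv_low w hvw ⟨hw_int, by omega⟩

lemma IsTemporalRepresentation.sibling_isLeaf_or_isHybrid (hτ : IsTemporalRepresentation E τ)
    {v w : V} (hv_max : ∀ u, ¬ IsLeaf E u → τ u ≤ τ v) (hv : IsHybrid E v)
    (hvw : Sibling E v w) : IsLeaf E w ∨ IsHybrid E w := by
  obtain ⟨-, p, hpv, hpw⟩ := hvw
  by_contra! hw
  have hpv_eq := (hτ p v hpv).2 hv
  have hpw_lt := (hτ p w hpw).1 (not_isHybrid_iff_isTreeNode.1 hw.2)
  have := hv_max w hw.1
  omega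

end

theorem stmt4_general {V : Type} [Fintype V] (E : V → V → Prop) (r : V)
    (hnet : IsHybNet E r) (hti : TimeConsistent E) :
    ∃ v : V,
      (¬ IsLeaf E v ∧ IsTreeNode E v ∧ ∀ w, E v w → IsLeaf E w ∧ IsTreeNode E w) ∨
      (¬ IsLeaf E v ∧ IsHybrid E v ∧ (∀ w, E v w → IsLeaf E w ∧ IsTreeNode E w) ∧
        ∀ w, Sibling E v w → IsLeaf E w ∨ IsHybrid E w) ∨
      (IsLeaf E v ∧ IsHybrid E v ∧ ∀ w, Sibling E v w → IsLeaf E w ∨ IsHybrid E w) := by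
  obtain ⟨τ, hτ : IsTemporalRepresentation E τ⟩ := hti
  obtain ⟨v, hv_int, hv_max, hv_leaves⟩ :=
    hτ.exists_latest_internal_children_isLeaf hnet.acyclic ⟨r, hnet.not_isLeaf_root⟩
  by_cases hhyb : ∃ w, E v w ∧ IsHybrid E w
  · obtain ⟨w, hvw, hw⟩ := hhyb
    have hτw : τ v = τ w := (hτ v w hvw).2 hw
    exact ⟨w, .inr <| .inr ⟨hv_leaves w hvw, hw,
      fun x hx => hτ.sibling_isLeaf_or_isHybrid (hτw ▸ hv_max) hw hx⟩⟩
  · push Not at hhyb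
    have hv_tree_leaves : ∀ w, E v w → IsLeaf E w ∧ IsTreeNode E w := fun w hvw =>
      ⟨hv_leaves w hvw, not_isHybrid_iff_isTreeNode.1 (hhyb w hvw)⟩
    by_cases hv : IsTreeNode E v
    · exact ⟨v, .inl ⟨hv_int, hv, hv_tree_leaves⟩⟩
    · exact ⟨v, .inr <| .inl ⟨hv_int, isHybrid_iff_not_isTreeNode.2 hv, hv_tree_leaves,
        fun x hx => hτ.sibling_isLeaf_or_isHybrid hv_max (isHybrid_iff_not_isTreeNode.2 hv) hx⟩⟩

/-- Every TCTC hybridization network with more than one leaf contains a node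
satisfying one of the three listed properties. -/
theorem stmt4 {V : Type} [Fintype V] (E : V → V → Prop) (r : V)
    (hnet : IsHybNet E r) (htc : TreeChild E) (hti : TimeConsistent E)
    (hleaves : 1 < {v | IsLeaf E v}.ncard) :
    ∃ v : V,
      (¬ IsLeaf E v ∧ IsTreeNode E v ∧ ∀ w, E v w → IsLeaf E w ∧ IsTreeNode E w) ∨
      (¬ IsLeaf E v ∧ IsHybrid E v ∧ (∀ w, E v w → IsLeaf E w ∧ IsTreeNode E w) ∧
        ∀ w, Sibling E v w → IsLeaf E w ∨ IsHybrid E w) ∨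
      (IsLeaf E v ∧ IsHybrid E v ∧ ∀ w, Sibling E v w → IsLeaf E w ∨ IsHybrid E w) :=
  stmt4_general E r hnet hti
end

section
/- In a tree-child hybridization network, every internal node u has at least one tree descendant leaf; moreover, every tree descendant v of u is a strict descendant of u and the tree path from u to v is unique. -/
open Classical

/-!
A tree node has at most one parent, so walking backwards along a tree path is deterministic.
Hence the reversals of a tree path `u ⋯ v` and of any path ending in `v` agree until one of
them stops: one path is a suffix of the other. If the tree path is the suffix, the other path
passes through `u`; if a path from the root is the suffix, it starts at `u`, since the root has
no parent. Two tree paths from `u` to `v` that are suffixes of one another coincide, as paths in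
an acyclic network repeat no node. A tree descendant leaf is reached by following tree
children, which terminates by acyclicity.
-/

namespace List

variable {α : Type*} {R S : α → α → Prop}

theorem IsChain.transGen_of_mem {a x : α} {l : List α} (h : IsChain R (a :: l)) (hx : x ∈ l) :
    Relation.TransGen R a x :=
  (pairwise_cons.mp (h.imp fun _ _ => Relation.TransGen.single).pairwise).1 x hx

theorem IsChain.prefix_or_prefix (hRS : ∀ a b c, R a b → S a c → b = c) :
    ∀ {a : α} {l₁ l₂ : List α}, IsChain R (a :: l₁) → IsChain S (a :: l₂) →
      l₁ <+: l₂ ∨ l₂ <+: l₁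
  | _, [], _, _, _ => .inl nil_prefix
  | _, _ :: _, [], _, _ => .inr nil_prefix
  | a, b :: _, c :: _, h₁, h₂ => by
    rw [isChain_cons_cons] at h₁ h₂
    obtain rfl := hRS a b c h₁.1 h₂.1
    simpa only [cons_prefix_cons, true_and] using prefix_or_prefix hRS h₁.2 h₂.2

theorem IsSuffix.eq_of_head?_eq {l₁ l₂ : List α} (h : l₁ <:+ l₂) (hnd : l₂.Nodup)
    (hne : l₁ ≠ []) (hhead : l₁.head? = l₂.head?) : l₁ = l₂ := by
  obtain ⟨_ | ⟨a, t⟩, rfl⟩ := h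
  · rfl
  · obtain ⟨b, l, rfl⟩ := exists_cons_of_ne_nil hne
    obtain rfl : b = a := by simpa using hhead
    simp at hnd

end List

open List Relation

section TreePaths

variable {V : Type} {E : V → V → Prop} {p q : List V} {u v w : V}

def TreeArc (E : V → V → Prop) (a b : V) : Prop := E a b ∧ IsTreeNode E b

theorem IsTreeNode.eq_of_rel [Finite V] {a b : V} (hv : IsTreeNode E v) (ha : E a v)
    (hb : E b v) : a = b :=
  (Set.ncard_le_one (Set.toFinite _)).mp hv a ha b hb

theorem Acyclic.nodup_of_isChain (hac : Acyclic E) (hp : IsChain E p) : p.Nodup :=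
  have : Std.Irrefl (TransGen E) := ⟨hac⟩
  (hp.imp fun _ _ => TransGen.single).pairwise.nodup

theorem Acyclic.wellFounded_flip [Finite V] (hac : Acyclic E) : WellFounded (flip E) :=
  have : IsTrans V (flip (TransGen E)) := ⟨fun _ _ _ h₁ h₂ => h₂.trans h₁⟩
  have : Std.Irrefl (flip (TransGen E)) := ⟨hac⟩
  Subrelation.wf (r := flip (TransGen E)) (fun h => TransGen.single h)
    (Finite.wellFounded_of_trans_of_irrefl _)

theorem WalkFromTo.desc_s5 (h : WalkFromTo E u v p) : Desc E u v := by
  obtain ⟨l, rfl⟩ := head?_eq_some_iff.mp h.2.1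
  rcases mem_cons.mp (mem_of_getLast? h.2.2) with rfl | hv
  · exact .refl
  · exact (h.1.2.transGen_of_mem hv).to_reflTransGen

theorem treePath_pair (h : TreeArc E u v) : TreePath E [u, v] u v :=
  ⟨⟨⟨cons_ne_nil _ _, isChain_pair.mpr h.1⟩, rfl, rfl⟩, le_rfl, by simpa using h.2⟩

theorem TreePath.cons (hp : TreePath E p w v) (h : TreeArc E u w) : TreePath E (u :: p) u v := by
  obtain ⟨l, rfl⟩ := head?_eq_some_iff.mp hp.1.2.1
  obtain ⟨⟨⟨-, hch⟩, -, hlast⟩, -, htail⟩ := hp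
  refine ⟨⟨⟨cons_ne_nil _ _, isChain_cons_cons.mpr ⟨h.1, hch⟩⟩, rfl, ?_⟩, by simp, ?_⟩
  · simpa [getLast?_cons_cons] using hlast
  · simpa [h.2] using htail

theorem TreePath.isChain (hp : TreePath E p u v) : IsChain (TreeArc E) p :=
  hp.1.1.2.imp_of_mem_tail_imp fun _ b _ hb hab => ⟨hab, hp.2.2 b hb⟩

theorem TreePath.suffix_or_suffix [Finite V] (hp : TreePath E p u v) (hq : IsChain E q)
    (hqv : q.getLast? = some v) : p <:+ q ∨ q <:+ p := by
  obtain ⟨lp, hlp⟩ := head?_eq_some_iff.mp (head?_reverse.trans hp.1.2.2)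
  obtain ⟨lq, hlq⟩ := head?_eq_some_iff.mp (head?_reverse.trans hqv)
  have hcp : IsChain (flip (TreeArc E)) (v :: lp) := hlp ▸ isChain_reverse.mpr hp.isChain
  have hcq : IsChain (flip E) (v :: lq) := hlq ▸ isChain_reverse.mpr hq
  rw [← reverse_prefix, ← reverse_prefix, hlp, hlq, cons_prefix_cons, cons_prefix_cons]
  simpa only [true_and] using
    IsChain.prefix_or_prefix (fun _ _ _ hb hc => hb.2.eq_of_rel hb.1 hc) hcp hcq

theorem TreePath.unique [Finite V] (hac : Acyclic E) (hp : TreePath E p u v)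
    (hq : TreePath E q u v) : p = q := by
  have hhead : p.head? = q.head? := hp.1.2.1.trans hq.1.2.1.symm
  rcases hp.suffix_or_suffix hq.1.1.2 hq.1.2.2 with h | h
  · exact h.eq_of_head?_eq (hac.nodup_of_isChain hq.1.1.2) hp.1.1.1 hhead
  · exact (h.eq_of_head?_eq (hac.nodup_of_isChain hp.1.1.2) hq.1.1.1 hhead.symm).symm

theorem TreePath.mem_of_walkFromTo_of_isRootNode [Finite V] {r : V} (hp : TreePath E p u v)
    (hr : IsRootNode E r) (hw : WalkFromTo E r v q) : u ∈ q := by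
  rcases hp.suffix_or_suffix hw.1.2 hw.2.2 with h | h
  · exact h.subset (mem_of_head? hp.1.2.1)
  · obtain ⟨l, rfl⟩ := head?_eq_some_iff.mp hp.1.2.1
    rcases mem_cons.mp (h.subset (mem_of_head? hw.2.1)) with rfl | hrl
    · exact mem_of_head? hw.2.1
    · obtain ⟨x, -, hx⟩ := TransGen.tail'_iff.mp (hp.1.1.2.transGen_of_mem hrl)
      exact absurd hx (hr x)

theorem TreeChild.exists_isLeaf_treeDesc [Finite V] (htc : TreeChild E) (hac : Acyclic E) :
    ∀ u, ¬ IsLeaf E u → ∃ v, IsLeaf E v ∧ TreeDesc E u v := by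
  intro u
  induction u using hac.wellFounded_flip.induction with
  | _ u ih =>
    intro hu
    obtain ⟨w, hw⟩ := htc u hu
    by_cases hwl : IsLeaf E w
    · exact ⟨w, hwl, _, treePath_pair hw⟩
    · obtain ⟨v, hvl, p, hp⟩ := ih w hw.1 hwl
      exact ⟨v, hvl, _, hp.cons hw⟩

end TreePaths

/-- In a tree-child hybridization network, every internal node has a tree
descendant leaf; every tree descendant `v` of `u` is a strict descendant of `u`, and the
tree path from `u` to `v` is unique. -/
theorem stmt5 {V : Type} [Fintype V] (E : V → V → Prop) (r : V)
    (hnet : IsHybNet E r) (htc : TreeChild E) :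
    ∀ u, ¬ IsLeaf E u →
      (∃ v, IsLeaf E v ∧ TreeDesc E u v) ∧
      ∀ v, TreeDesc E u v →
        StrictAnc E u v ∧ ∀ p q, TreePath E p u v → TreePath E q u v → p = q := by
  intro u hu
  refine ⟨htc.exists_isLeaf_treeDesc hnet.acyclic u hu, fun v ⟨p, hp⟩ => ⟨?_, ?_⟩⟩
  · exact ⟨hp.1.desc_s5, fun _ _ hr hw => hp.mem_of_walkFromTo_of_isRootNode hr hw⟩
  · exact fun _ _ => TreePath.unique hnet.acyclic
end
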